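/- For any weighted (dissimilarity) graph G=(V,E,w) on n vertices, every tree T output by the average-linkage algorithm satisfies val(T) ≥ (n/2)·Σ_{e∈E} w(e); consequently val(T) ≥ OPT/2, i.e., average-linkage is a 2-approximation for the dissimilarity objective. -/

import Mathlib

open scoped BigOperators

attribute [local instance] Classical.propDecidable

noncomputable section

/-! ### Cluster trees -/

/-- A (binary, rooted) hierarchical-clustering tree whose leaves are labelled by
vertices of `V`. -/
inductive ClusterTree (V : Type) : Type where
  | leaf : V → ClusterTree V
  | node : ClusterTree V → ClusterTree V → ClusterTree V

namespace ClusterTree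

variable {V : Type}

/-- The list of leaf labels of the tree (left-to-right). -/
def leavesList : ClusterTree V → List V
  | leaf v => [v]
  | node L R => leavesList L ++ leavesList R

/-- The set of leaf labels of the tree. -/
def leaves [DecidableEq V] (T : ClusterTree V) : Finset V :=
  T.leavesList.toFinset

end ClusterTree

section Defs

variable {V : Type}

/-- `T` is a cluster tree for the whole (finite) vertex set `V`: its leaves are
pairwise distinct and exhaust the vertices. -/
def IsClusterTree [DecidableEq V] [Fintype V] (T : ClusterTree V) : Prop :=
  T.leavesList.Nodup ∧ T.leaves = Finset.univ

/-- `IsSubtreeOf s T` : `s` occurs as a rooted subtree of `T`. -/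
def IsSubtreeOf : ClusterTree V → ClusterTree V → Prop
  | s, ClusterTree.leaf v => s = ClusterTree.leaf v
  | s, ClusterTree.node L R => s = ClusterTree.node L R ∨ IsSubtreeOf s L ∨ IsSubtreeOf s R

/-- The subtree of `T` rooted at the lowest common ancestor of the leaves `x` and `y`. -/
def lcaSubtree [DecidableEq V] : ClusterTree V → V → V → ClusterTree V
  | ClusterTree.leaf v, _, _ => ClusterTree.leaf v
  | ClusterTree.node L R, x, y =>
    if x ∈ L.leaves ∧ y ∈ L.leaves then lcaSubtree L x y
    else if x ∈ R.leaves ∧ y ∈ R.leaves then lcaSubtree R x y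
    else ClusterTree.node L R

/-- `w(A, B) = ∑_{a ∈ A, b ∈ B} w a b`. -/
def cutWeight (w : V → V → ℝ) (A B : Finset V) : ℝ := ∑ a ∈ A, ∑ b ∈ B, w a b

/-- `w(A) = ∑_{a, b ∈ A} w a b` (ordered pairs; each edge counted twice). -/
def innerWeight (w : V → V → ℝ) (A : Finset V) : ℝ := ∑ a ∈ A, ∑ b ∈ A, w a b

/-- `∑_{e ∈ E} w(e)`, for a symmetric weight function with zero diagonal. -/
def totalWeight [Fintype V] (w : V → V → ℝ) : ℝ := (∑ u : V, ∑ v : V, w u v) / 2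

/-- Cost of a cluster tree: each internal node `N` with children `N₁, N₂`
contributes `w(V(N₁), V(N₂)) · g(|V(N₁)|, |V(N₂)|)`. -/
def treeCost [DecidableEq V] (w : V → V → ℝ) (g : ℕ → ℕ → ℝ) : ClusterTree V → ℝ
  | ClusterTree.leaf _ => 0
  | ClusterTree.node L R =>
      cutWeight w L.leaves R.leaves * g L.leaves.card R.leaves.card
        + treeCost w g L + treeCost w g R

/-- Dasgupta's cost (= `treeCost` with `g (a, b) = a + b`). -/
def dasguptaCost [DecidableEq V] (w : V → V → ℝ) : ClusterTree V → ℝ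
  | ClusterTree.leaf _ => 0
  | ClusterTree.node L R =>
      ((L.leaves.card + R.leaves.card : ℕ) : ℝ) * cutWeight w L.leaves R.leaves
        + dasguptaCost w L + dasguptaCost w R

/-! ### Generating trees -/

/-- `T` is a generating tree for the similarity graph `w` : there is a nonnegative
weight function on the internal nodes, non-increasing from leaves towards the root,
realizing every edge weight at the corresponding LCA. -/
def IsGenerating [DecidableEq V] (w : V → V → ℝ) (T : ClusterTree V) : Prop :=
  ∃ W : ClusterTree V → ℝ,
    (∀ s, IsSubtreeOf s T → 0 ≤ W s) ∧
    (∀ L R, IsSubtreeOf (ClusterTree.node L R) T →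
      ∀ s, IsSubtreeOf s L ∨ IsSubtreeOf s R → W (ClusterTree.node L R) ≤ W s) ∧
    (∀ x y, x ∈ T.leaves → y ∈ T.leaves → x ≠ y → w x y = W (lcaSubtree T x y))

/-- Generating tree in the dissimilarity setting (weights non-decreasing from
leaves towards the root). -/
def IsGeneratingDissim [DecidableEq V] (w : V → V → ℝ) (T : ClusterTree V) : Prop :=
  ∃ W : ClusterTree V → ℝ,
    (∀ s, IsSubtreeOf s T → 0 ≤ W s) ∧
    (∀ L R, IsSubtreeOf (ClusterTree.node L R) T →
      ∀ s, IsSubtreeOf s L ∨ IsSubtreeOf s R → W s ≤ W (ClusterTree.node L R)) ∧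
    (∀ x y, x ∈ T.leaves → y ∈ T.leaves → x ≠ y → w x y = W (lcaSubtree T x y))

/-- Strictly generating tree (similarity setting). -/
def IsStrictlyGenerating [DecidableEq V] (w : V → V → ℝ) (T : ClusterTree V) : Prop :=
  ∃ W : ClusterTree V → ℝ,
    (∀ s, IsSubtreeOf s T → 0 ≤ W s) ∧
    (∀ L R, IsSubtreeOf (ClusterTree.node L R) T →
      ∀ s, IsSubtreeOf s L ∨ IsSubtreeOf s R → W (ClusterTree.node L R) < W s) ∧
    (∀ x y, x ∈ T.leaves → y ∈ T.leaves → x ≠ y → w x y = W (lcaSubtree T x y))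

/-- Strictly generating tree (dissimilarity setting). -/
def IsStrictlyGeneratingDissim [DecidableEq V] (w : V → V → ℝ) (T : ClusterTree V) : Prop :=
  ∃ W : ClusterTree V → ℝ,
    (∀ s, IsSubtreeOf s T → 0 ≤ W s) ∧
    (∀ L R, IsSubtreeOf (ClusterTree.node L R) T →
      ∀ s, IsSubtreeOf s L ∨ IsSubtreeOf s R → W s < W (ClusterTree.node L R)) ∧
    (∀ x y, x ∈ T.leaves → y ∈ T.leaves → x ≠ y → w x y = W (lcaSubtree T x y))

/-! ### Ultrametrics and ground-truth inputs -/

/-- `d` is an ultrametric on `V`. -/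
def IsUltrametric (d : V → V → ℝ) : Prop :=
  (∀ x, d x x = 0) ∧ (∀ x y, d x y = 0 → x = y) ∧ (∀ x y, d x y = d y x) ∧
  (∀ x y, 0 ≤ d x y) ∧ (∀ x y z, d x y ≤ max (d x z) (d y z))

/-- `w` is a similarity graph generated from an ultrametric via a
non-increasing nonnegative function `f`. -/
def GeneratedFromUltrametric (w : V → V → ℝ) : Prop :=
  ∃ (d : V → V → ℝ) (f : ℝ → ℝ),
    IsUltrametric d ∧
    (∀ a b : ℝ, 0 ≤ a → a ≤ b → f b ≤ f a) ∧
    (∀ a : ℝ, 0 ≤ a → 0 ≤ f a) ∧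
    (∀ x y : V, x ≠ y → w x y = f (d x y))

/-- `w` is a dissimilarity graph generated from an ultrametric via a
non-decreasing nonnegative function `f`. -/
def GeneratedFromUltrametricDissim (w : V → V → ℝ) : Prop :=
  ∃ (d : V → V → ℝ) (f : ℝ → ℝ),
    IsUltrametric d ∧
    (∀ a b : ℝ, 0 ≤ a → a ≤ b → f a ≤ f b) ∧
    (∀ a : ℝ, 0 ≤ a → 0 ≤ f a) ∧
    (∀ x y : V, x ≠ y → w x y = f (d x y))

/-- `w` is a similarity graph generated from a *minimal* ultrametric:
pairs with equal weights are at equal ultrametric distance. -/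
def GeneratedFromMinimalUltrametric (w : V → V → ℝ) : Prop :=
  ∃ (d : V → V → ℝ) (f : ℝ → ℝ),
    IsUltrametric d ∧
    (∀ a b : ℝ, 0 ≤ a → a ≤ b → f b ≤ f a) ∧
    (∀ a : ℝ, 0 ≤ a → 0 ≤ f a) ∧
    (∀ x y : V, x ≠ y → w x y = f (d x y)) ∧
    (∀ u v u' v' : V, u ≠ v → u' ≠ v' → f (d u v) = f (d u' v') → d u v = d u' v')

/-- Dissimilarity analogue of `GeneratedFromMinimalUltrametric`. -/
def GeneratedFromMinimalUltrametricDissim (w : V → V → ℝ) : Prop :=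
  ∃ (d : V → V → ℝ) (f : ℝ → ℝ),
    IsUltrametric d ∧
    (∀ a b : ℝ, 0 ≤ a → a ≤ b → f a ≤ f b) ∧
    (∀ a : ℝ, 0 ≤ a → 0 ≤ f a) ∧
    (∀ x y : V, x ≠ y → w x y = f (d x y)) ∧
    (∀ u v u' v' : V, u ≠ v → u' ≠ v' → f (d u v) = f (d u' v') → d u v = d u' v')

/-- `w` is a `δ`-adversarially-perturbed (similarity) ground-truth input. -/
def IsDeltaPerturbedGroundTruth (w : V → V → ℝ) (δ : ℝ) : Prop :=
  ∃ (d : V → V → ℝ) (f : ℝ → ℝ),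
    IsUltrametric d ∧
    (∀ a b : ℝ, 0 ≤ a → a ≤ b → f b ≤ f a) ∧
    (∀ a : ℝ, 0 ≤ a → 0 ≤ f a) ∧
    (∀ x y : V, x ≠ y → f (d x y) ≤ w x y ∧ w x y ≤ δ * f (d x y))

end Defs

/-- The unit-weight clique on `V`. -/
def cliqueW (V : Type) [DecidableEq V] : V → V → ℝ := fun x y => if x = y then 0 else 1

/-- Admissibility of a cost function (similarity setting): on every similarity graph
generated from a minimal ultrametric, a cluster tree minimizes the cost
iff it is a generating tree. -/
def Admissible (g : ℕ → ℕ → ℝ) : Prop :=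
  ∀ (V : Type) [Fintype V] [DecidableEq V] (w : V → V → ℝ),
    GeneratedFromMinimalUltrametric w →
    ∀ T : ClusterTree V, IsClusterTree T →
      ((∀ T' : ClusterTree V, IsClusterTree T' → treeCost w g T ≤ treeCost w g T')
        ↔ IsGenerating w T)

/-- Admissibility of a value function (dissimilarity setting): on every dissimilarity
graph generated from a minimal ultrametric, a cluster tree maximizes the value
iff it is a generating tree. -/
def AdmissibleDissim (g : ℕ → ℕ → ℝ) : Prop :=
  ∀ (V : Type) [Fintype V] [DecidableEq V] (w : V → V → ℝ),
    GeneratedFromMinimalUltrametricDissim w →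
    ∀ T : ClusterTree V, IsClusterTree T →
      ((∀ T' : ClusterTree V, IsClusterTree T' → treeCost w g T' ≤ treeCost w g T)
        ↔ IsGeneratingDissim w T)

/-! ### Agglomerative (linkage) algorithms, modelled as a nondeterministic relation -/

/-- The initial state of an agglomerative algorithm: all singleton trees. -/
def initState (V : Type) [Fintype V] : Multiset (ClusterTree V) :=
  Finset.univ.val.map ClusterTree.leaf

/-- One merge step of a generic linkage algorithm: merge two candidate trees whose
leaf-set distance `D` is best (w.r.t. `better a b` = "`a` is at least as good as `b`")
among all candidate pairs; any tie-breaking choice is allowed. -/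
inductive MergeStep {V : Type} [DecidableEq V] (D : Finset V → Finset V → ℝ)
    (better : ℝ → ℝ → Prop) :
    Multiset (ClusterTree V) → Multiset (ClusterTree V) → Prop where
  | step : ∀ (rest : Multiset (ClusterTree V)) (T1 T2 : ClusterTree V),
      (∀ (T1' T2' : ClusterTree V) (rest' : Multiset (ClusterTree V)),
          T1 ::ₘ T2 ::ₘ rest = T1' ::ₘ T2' ::ₘ rest' →
          better (D T1.leaves T2.leaves) (D T1'.leaves T2'.leaves)) →
      MergeStep D better (T1 ::ₘ T2 ::ₘ rest) (ClusterTree.node T1 T2 ::ₘ rest)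

/-- `T` is a possible output of the linkage algorithm with dissimilarity/similarity
measure `D` and preference `better`. -/
def IsLinkageOutput {V : Type} [Fintype V] [DecidableEq V]
    (D : Finset V → Finset V → ℝ) (better : ℝ → ℝ → Prop) (T : ClusterTree V) : Prop :=
  Relation.ReflTransGen (MergeStep D better) (initState V) {T}

/-- Average-linkage measure. -/
def avgDist {V : Type} (w : V → V → ℝ) (A B : Finset V) : ℝ :=
  cutWeight w A B / ((A.card : ℝ) * (B.card : ℝ))

/-- Single-linkage measure: `min_{x ∈ A, y ∈ B} w x y`. -/
def minLinkDist {V : Type} [DecidableEq V] (w : V → V → ℝ) (A B : Finset V) : ℝ :=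
  WithTop.untopD 0 (((A ×ˢ B).image fun p => w p.1 p.2).min)

/-- Complete-linkage measure: `max_{x ∈ A, y ∈ B} w x y`. -/
def maxLinkDist {V : Type} [DecidableEq V] (w : V → V → ℝ) (A B : Finset V) : ℝ :=
  WithBot.unbotD 0 (((A ×ˢ B).image fun p => w p.1 p.2).max)

/-! ### Cuts -/

section Cuts

variable {V : Type}

/-- `A ⊕ x` : add `x` to `A` if absent, remove it if present. -/
def symmDiffV [DecidableEq V] (A : Finset V) (x : V) : Finset V :=
  if x ∈ A then A.erase x else insert x A

/-- `(A, B)` is an `ε/|A ∪ B|`-locally-densest cut of the induced subgraph on `A ∪ B`. -/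
def IsLocallyDensestCut [DecidableEq V] (w : V → V → ℝ) (ε : ℝ) (A B : Finset V) : Prop :=
  ∀ x ∈ A ∪ B,
    cutWeight w (symmDiffV A x) (symmDiffV B x) /
        (((symmDiffV A x).card : ℝ) * ((symmDiffV B x).card : ℝ)) ≤
      (1 + ε / ((A ∪ B).card : ℝ)) *
        (cutWeight w A B / ((A.card : ℝ) * (B.card : ℝ)))

/-- Cluster trees obtained by recursively splitting along `ε/n`-locally-densest cuts. -/
def IsRecLocallyDensestCutTree [DecidableEq V] (w : V → V → ℝ) (ε : ℝ) :
    ClusterTree V → Prop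
  | ClusterTree.leaf _ => True
  | ClusterTree.node L R =>
      IsLocallyDensestCut w ε L.leaves R.leaves ∧
      IsRecLocallyDensestCutTree w ε L ∧ IsRecLocallyDensestCutTree w ε R

/-- Cluster trees obtained by recursively splitting along `φ`-approximate sparsest cuts. -/
def IsRecApproxSparsestCutTree [DecidableEq V] (w : V → V → ℝ) (φ : ℝ) :
    ClusterTree V → Prop
  | ClusterTree.leaf _ => True
  | ClusterTree.node L R =>
      (∀ S : Finset V, S ⊆ L.leaves ∪ R.leaves → S.Nonempty → S ⊂ L.leaves ∪ R.leaves →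
        cutWeight w L.leaves R.leaves / ((L.leaves.card : ℝ) * (R.leaves.card : ℝ)) ≤
          φ * (cutWeight w S ((L.leaves ∪ R.leaves) \ S) /
            ((S.card : ℝ) * (((L.leaves ∪ R.leaves) \ S).card : ℝ)))) ∧
      IsRecApproxSparsestCutTree w φ L ∧ IsRecApproxSparsestCutTree w φ R

/-- Cluster trees obtained by recursively splitting along exact sparsest cuts. -/
def IsRecSparsestCutTree [DecidableEq V] (w : V → V → ℝ) : ClusterTree V → Prop
  | ClusterTree.leaf _ => True
  | ClusterTree.node L R =>
      (∀ S : Finset V, S ⊆ L.leaves ∪ R.leaves → S.Nonempty → S ⊂ L.leaves ∪ R.leaves →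
        cutWeight w L.leaves R.leaves / ((L.leaves.card : ℝ) * (R.leaves.card : ℝ)) ≤
          cutWeight w S ((L.leaves ∪ R.leaves) \ S) /
            ((S.card : ℝ) * (((L.leaves ∪ R.leaves) \ S).card : ℝ))) ∧
      IsRecSparsestCutTree w L ∧ IsRecSparsestCutTree w R

/-- Cluster trees obtained by recursively splitting along exact densest cuts. -/
def IsRecDensestCutTree [DecidableEq V] (w : V → V → ℝ) : ClusterTree V → Prop
  | ClusterTree.leaf _ => True
  | ClusterTree.node L R =>
      (∀ S : Finset V, S ⊆ L.leaves ∪ R.leaves → S.Nonempty → S ⊂ L.leaves ∪ R.leaves →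
        cutWeight w S ((L.leaves ∪ R.leaves) \ S) /
            ((S.card : ℝ) * (((L.leaves ∪ R.leaves) \ S).card : ℝ)) ≤
          cutWeight w L.leaves R.leaves / ((L.leaves.card : ℝ) * (R.leaves.card : ℝ))) ∧
      IsRecDensestCutTree w L ∧ IsRecDensestCutTree w R

/-- Cluster trees produced by the bisection 2-Center algorithm (similarity setting). -/
def IsBisection2CenterTree [DecidableEq V] (w : V → V → ℝ) : ClusterTree V → Prop
  | ClusterTree.leaf _ => True
  | ClusterTree.node L R =>
      (∃ u ∈ L.leaves ∪ R.leaves, ∃ v ∈ L.leaves ∪ R.leaves, u ≠ v ∧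
        (∃ r : ℝ,
          (∀ x ∈ L.leaves ∪ R.leaves, r ≤ max (w x u) (w x v)) ∧
          (∀ u' ∈ L.leaves ∪ R.leaves, ∀ v' ∈ L.leaves ∪ R.leaves, u' ≠ v' →
            ∃ x ∈ L.leaves ∪ R.leaves, max (w x u') (w x v') ≤ r)) ∧
        L.leaves = (L.leaves ∪ R.leaves).filter fun x => w x v ≤ w x u) ∧
      IsBisection2CenterTree w L ∧ IsBisection2CenterTree w R

/-- Cluster trees produced by the bisection 2-Center algorithm (dissimilarity setting). -/
def IsBisection2CenterTreeDissim [DecidableEq V] (w : V → V → ℝ) : ClusterTree V → Prop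
  | ClusterTree.leaf _ => True
  | ClusterTree.node L R =>
      (∃ u ∈ L.leaves ∪ R.leaves, ∃ v ∈ L.leaves ∪ R.leaves, u ≠ v ∧
        (∃ r : ℝ,
          (∀ x ∈ L.leaves ∪ R.leaves, min (w x u) (w x v) ≤ r) ∧
          (∀ u' ∈ L.leaves ∪ R.leaves, ∀ v' ∈ L.leaves ∪ R.leaves, u' ≠ v' →
            ∃ x ∈ L.leaves ∪ R.leaves, r ≤ min (w x u') (w x v'))) ∧
        L.leaves = (L.leaves ∪ R.leaves).filter fun x => w x u ≤ w x v) ∧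
      IsBisection2CenterTreeDissim w L ∧ IsBisection2CenterTreeDissim w R

end Cuts

/-! ### Pivot algorithms -/

mutual
/-- Trees produced by the fast pivot algorithm (Algorithm 6 of CKMM):
pick a pivot `p`, split the other vertices into classes of equal similarity to `p`
(in strictly decreasing order of similarity), recurse, and attach along a spine. -/
inductive IsPivotTree {V : Type} [DecidableEq V] (w : V → V → ℝ) : ClusterTree V → Prop where
  | mk : ∀ (p : V) (T : ClusterTree V), PivotSpine w p T → IsPivotTree w T

/-- The spine of the pivot algorithm: `PivotSpine w p T` says that `T` is an iterated
union of the single-vertex tree on `p` with pivot trees of the similarity classes of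
`p`, attached in strictly decreasing order of similarity to `p`. -/
inductive PivotSpine {V : Type} [DecidableEq V] (w : V → V → ℝ) : V → ClusterTree V → Prop where
  | base : ∀ p : V, PivotSpine w p (ClusterTree.leaf p)
  | step : ∀ (p : V) (S T : ClusterTree V) (c : ℝ),
      PivotSpine w p S → IsPivotTree w T →
      (∀ v ∈ T.leaves, w p v = c) →
      (∀ u ∈ S.leaves, u ≠ p → c < w p u) →
      PivotSpine w p (ClusterTree.node S T)
end

mutual
/-- Trees produced by the robust pivot algorithm (Algorithm 7 of CKMM). -/
inductive IsRobustPivotTree {V : Type} [DecidableEq V] (w : V → V → ℝ) :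
    ClusterTree V → Prop where
  | mk : ∀ (p : V) (T : ClusterTree V), RobustPivotSpine w T.leaves p T →
      IsRobustPivotTree w T

/-- `RobustPivotSpine w U p T` : `T` is a prefix (a spine) of a run of the robust pivot
algorithm on the vertex set `U`, started at the pivot `p`.  At each step, `wi` is the
maximum weight of an edge in the cut `(Ṽ, U \ Ṽ)` (where `Ṽ` is the set of already
clustered vertices), and the next block is the least subset of `U \ Ṽ` closed under
adding any vertex having an edge of weight at least `wi` into the block or into `Ṽ`. -/
inductive RobustPivotSpine {V : Type} [DecidableEq V] (w : V → V → ℝ) :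
    Finset V → V → ClusterTree V → Prop where
  | base : ∀ (U : Finset V) (p : V), RobustPivotSpine w U p (ClusterTree.leaf p)
  | step : ∀ (U : Finset V) (p : V) (S T : ClusterTree V) (wi : ℝ),
      RobustPivotSpine w U p S →
      IsRobustPivotTree w T →
      (∃ p1 ∈ S.leaves, ∃ p2 ∈ U \ S.leaves, w p1 p2 = wi) →
      (∀ q1 ∈ S.leaves, ∀ q2 ∈ U \ S.leaves, w q1 q2 ≤ wi) →
      T.leaves ⊆ U \ S.leaves →
      (∀ u ∈ U \ S.leaves, (∃ v ∈ T.leaves ∪ S.leaves, wi ≤ w u v) → u ∈ T.leaves) →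
      (∀ C : Finset V, C ⊆ U \ S.leaves →
        (∀ u ∈ U \ S.leaves, (∃ v ∈ C ∪ S.leaves, wi ≤ w u v) → u ∈ C) →
        T.leaves ⊆ C) →
      RobustPivotSpine w U p (ClusterTree.node S T)
end

/-! ### Paths and caterpillars -/

/-- Attach the leaves from the list `l` one by one on top of `t` (a "spine"). -/
def spineTree {V : Type} : ClusterTree V → List V → ClusterTree V
  | t, [] => t
  | t, v :: vs => spineTree (ClusterTree.node t (ClusterTree.leaf v)) vs

/-- The unit-weight path on `n` vertices. -/
def pathW (n : ℕ) (i j : Fin n) : ℝ :=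
  if (i : ℕ) + 1 = (j : ℕ) ∨ (j : ℕ) + 1 = (i : ℕ) then 1 else 0

/-! ### Random graphs: hierarchical stochastic block model -/

/-- Index set for the potential edges of a graph on `Fin n`. -/
abbrev EdgeIdx (n : ℕ) := {p : Fin n × Fin n // p.1 < p.2}

/-- The (0/1) weight function of the random graph described by the edge
configuration `c`. -/
def configW {n : ℕ} (c : EdgeIdx n → Bool) (u v : Fin n) : ℝ :=
  if h : u < v then (if c ⟨(u, v), h⟩ then 1 else 0)
  else if h' : v < u then (if c ⟨(v, u), h'⟩ then 1 else 0)
  else 0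

/-- The probability of the edge configuration `c` when each edge `e` is present
independently with probability `q e`. -/
def configProb {n : ℕ} (q : Fin n → Fin n → ℝ) (c : EdgeIdx n → Bool) : ℝ :=
  ∏ e : EdgeIdx n, if c e then q e.val.1 e.val.2 else 1 - q e.val.1 e.val.2

/-- The expected cost `E[Γ(T) | ψ]` of a fixed cluster tree `T`, over the random
choice of the edges (with edge probabilities `q`). -/
def expectedCost {n : ℕ} (g : ℕ → ℕ → ℝ) (q : Fin n → Fin n → ℝ)
    (T : ClusterTree (Fin n)) : ℝ :=
  ∑ c : EdgeIdx n → Bool, configProb q c * treeCost (configW c) g T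

/-- The (fixed, size-independent) data of a hierarchical stochastic block model with
`k` bottom-level clusters: a generating tree `Ttil` with weights `Wtil` in `(0,1)`
(the graph `G̃ₖ` on `k` vertices generated from an ultrametric), and intra-cluster
probabilities `p i ∈ (0,1]` exceeding the weight of the parent of leaf `i`. -/
structure HSBM (k : ℕ) where
  Ttil : ClusterTree (Fin k)
  Wtil : ClusterTree (Fin k) → ℝ
  p : Fin k → ℝ
  ttil_isClusterTree : IsClusterTree Ttil
  wtil_pos : ∀ L R, IsSubtreeOf (ClusterTree.node L R) Ttil →
    0 < Wtil (ClusterTree.node L R)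
  wtil_lt_one : ∀ L R, IsSubtreeOf (ClusterTree.node L R) Ttil →
    Wtil (ClusterTree.node L R) < 1
  wtil_mono : ∀ L R, IsSubtreeOf (ClusterTree.node L R) Ttil →
    ∀ s, IsSubtreeOf s L ∨ IsSubtreeOf s R → Wtil (ClusterTree.node L R) ≤ Wtil s
  p_pos : ∀ i, 0 < p i
  p_le_one : ∀ i, p i ≤ 1
  p_gt_parent : ∀ L R, IsSubtreeOf (ClusterTree.node L R) Ttil →
    ∀ i : Fin k, L = ClusterTree.leaf i ∨ R = ClusterTree.leaf i →
      Wtil (ClusterTree.node L R) < p i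

/-- The edge probabilities of the HSBM `M` with sparsity `α`, given the assignment
`ψ` of vertices to bottom-level clusters.  These are also the edge weights of the
expected graph `Ḡ`. -/
def HSBM.edgeProb {k : ℕ} (M : HSBM k) (α : ℝ) {n : ℕ} (ψ : Fin n → Fin k) :
    Fin n → Fin n → ℝ := fun u v =>
  if ψ u = ψ v then α * M.p (ψ u)
  else α * M.Wtil (lcaSubtree M.Ttil (ψ u) (ψ v))

/-- The probability of the sample `ω = (ψ, c)` (labels and edges) of the HSBM `M`
with label proportions `f` and sparsity `α`. -/
def hsbmProb {k : ℕ} (M : HSBM k) (f : Fin k → ℝ) (α : ℝ) {n : ℕ}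
    (ω : (Fin n → Fin k) × (EdgeIdx n → Bool)) : ℝ :=
  (∏ v : Fin n, f (ω.1 v)) * configProb (M.edgeProb α ω.1) ω.2

/-- The common cost `κ(n)` of all cluster trees of the unit-weight clique on `n`
vertices (computed on the caterpillar tree). -/
def cliqueTreeCost (g : ℕ → ℕ → ℝ) (n : ℕ) : ℝ :=
  ∑ i ∈ Finset.range n, (i : ℝ) * g i 1

/-- The smoothness property: `max {g(n₁,n₂) : n₁+n₂ = n} = O(κ(n)/n²)`. -/
def SmoothCost (g : ℕ → ℕ → ℝ) : Prop :=
  ∃ C : ℝ, 0 < C ∧ ∀ n1 n2 : ℕ, 1 ≤ n1 → 1 ≤ n2 →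
    g n1 n2 * (((n1 + n2 : ℕ) : ℝ)) ^ 2 ≤ C * cliqueTreeCost g (n1 + n2)

end

/-!
Run average-linkage and attach to every current cluster `X` the potential
`val(X) + (2|X| + n)/4 · w(X, V \ X)`. Merging `A` and `B` changes the total potential by
`b/2 · w(A, R) + a/2 · w(B, R) - m/2 · w(A, B)`, where `R` is the union of the other clusters
and `m = |R|`. Minimality of the merged pair gives `|D| · w(A, B) ≤ |B| · w(A, D)` for every
other cluster `D`, and summing over `D` shows that the change is nonnegative. Initially the
potential is `(n + 2)/2 · Σ_e w(e)` and at the end it is `val(T)`. On the other side, every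
edge contributes at most `n · w(e)` to the value of any cluster tree.
-/

open Finset

namespace ClusterTree

variable {V : Type} [DecidableEq V]

theorem leaves_leaf (v : V) : (leaf v).leaves = {v} := by
  simp [leaves, leavesList]

theorem leaves_node (L R : ClusterTree V) : (node L R).leaves = L.leaves ∪ R.leaves := by
  simp [leaves, leavesList, List.toFinset_append]

theorem leaves_nonempty : ∀ T : ClusterTree V, T.leaves.Nonempty
  | leaf v => by simp [leaves_leaf]
  | node L _ => by rw [leaves_node]; exact (leaves_nonempty L).mono subset_union_left

theorem nodup_leavesList_node {L R : ClusterTree V} (h : (node L R).leavesList.Nodup) :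
    L.leavesList.Nodup ∧ R.leavesList.Nodup ∧ Disjoint L.leaves R.leaves := by
  rw [leavesList, List.nodup_append] at h
  refine ⟨h.1, h.2.1, disjoint_left.2 fun x hL hR => ?_⟩
  exact h.2.2 x (List.mem_toFinset.1 hL) x (List.mem_toFinset.1 hR) rfl

end ClusterTree

open ClusterTree

section Weights

variable {V : Type} (w : V → V → ℝ)

theorem cutWeight_nonneg (hw : ∀ u v, 0 ≤ w u v) (A B : Finset V) : 0 ≤ cutWeight w A B :=
  sum_nonneg fun a _ => sum_nonneg fun b _ => hw a b

theorem cutWeight_comm (hsym : ∀ u v, w u v = w v u) (A B : Finset V) :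
    cutWeight w A B = cutWeight w B A := by
  rw [cutWeight, cutWeight, sum_comm]
  exact sum_congr rfl fun _ _ => sum_congr rfl fun _ _ => hsym _ _

theorem cutWeight_empty_right (A : Finset V) : cutWeight w A ∅ = 0 := by
  simp [cutWeight]

theorem card_mul_cutWeight_le_of_avgDist_le {A B D : Finset V} (hA : A.Nonempty)
    (hB : B.Nonempty) (hD : D.Nonempty) (h : avgDist w A B ≤ avgDist w A D) :
    (D.card : ℝ) * cutWeight w A B ≤ B.card * cutWeight w A D := by
  have ha : (0 : ℝ) < A.card := by exact_mod_cast hA.card_pos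
  have hb : (0 : ℝ) < B.card := by exact_mod_cast hB.card_pos
  have hd : (0 : ℝ) < D.card := by exact_mod_cast hD.card_pos
  rw [avgDist, avgDist, div_le_div_iff₀ (by positivity) (by positivity)] at h
  nlinarith

theorem innerWeight_eq_cutWeight (A : Finset V) : innerWeight w A = cutWeight w A A := rfl

variable [DecidableEq V]

theorem cutWeight_union_left {A B : Finset V} (h : Disjoint A B) (C : Finset V) :
    cutWeight w (A ∪ B) C = cutWeight w A C + cutWeight w B C :=
  sum_union h

theorem cutWeight_union_right (A : Finset V) {B C : Finset V} (h : Disjoint B C) :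
    cutWeight w A (B ∪ C) = cutWeight w A B + cutWeight w A C := by
  simp only [cutWeight, sum_union h, sum_add_distrib]

theorem innerWeight_union (hsym : ∀ u v, w u v = w v u) {A B : Finset V} (h : Disjoint A B) :
    innerWeight w (A ∪ B) = innerWeight w A + innerWeight w B + 2 * cutWeight w A B := by
  simp only [innerWeight_eq_cutWeight]
  rw [cutWeight_union_left w h, cutWeight_union_right w _ h, cutWeight_union_right w _ h,
    cutWeight_comm w hsym B A]
  ring

end Weights

section UpperBound

variable {V : Type} [DecidableEq V] (w : V → V → ℝ)

theorem dasguptaCost_le_card_mul_innerWeight (hsym : ∀ u v, w u v = w v u)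
    (hw : ∀ u v, 0 ≤ w u v) :
    ∀ T : ClusterTree V, T.leavesList.Nodup →
      dasguptaCost w T ≤ T.leaves.card * innerWeight w T.leaves / 2
  | leaf v, _ => by
    simpa [dasguptaCost, leaves_leaf, innerWeight] using div_nonneg (hw v v) zero_le_two
  | node L R, h => by
    obtain ⟨hL, hR, hLR⟩ := nodup_leavesList_node h
    have ihL := dasguptaCost_le_card_mul_innerWeight hsym hw L hL
    have ihR := dasguptaCost_le_card_mul_innerWeight hsym hw R hR
    have hinnerL := cutWeight_nonneg w hw L.leaves L.leaves
    have hinnerR := cutWeight_nonneg w hw R.leaves R.leaves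
    rw [← innerWeight_eq_cutWeight] at hinnerL hinnerR
    rw [dasguptaCost, leaves_node, card_union_of_disjoint hLR, innerWeight_union w hsym hLR]
    push_cast
    nlinarith [cutWeight_nonneg w hw L.leaves R.leaves]

theorem dasguptaCost_le_card_mul_totalWeight [Fintype V] (hsym : ∀ u v, w u v = w v u)
    (hw : ∀ u v, 0 ≤ w u v) {T : ClusterTree V} (hT : IsClusterTree T) :
    dasguptaCost w T ≤ Fintype.card V * totalWeight w := by
  have h := dasguptaCost_le_card_mul_innerWeight w hsym hw T hT.1
  rw [hT.2, card_univ] at h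
  calc dasguptaCost w T ≤ Fintype.card V * innerWeight w univ / 2 := h
    _ = Fintype.card V * totalWeight w := by rw [totalWeight, innerWeight]; ring

end UpperBound

theorem compl_eq_union_compl_union {V : Type} [Fintype V] [DecidableEq V] {A B : Finset V}
    (h : Disjoint A B) : Aᶜ = B ∪ (A ∪ B)ᶜ := by
  ext v
  have : v ∈ A → v ∉ B := fun hA => disjoint_left.1 h hA
  simp only [mem_compl, mem_union]
  tauto

section LeafPartition

variable {V : Type} [DecidableEq V]

/-- The leaf sets of the trees in `S` are pairwise disjoint (as `U.val` has no duplicates)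
and cover `U`. -/
def IsLeafPartition (S : Multiset (ClusterTree V)) (U : Finset V) : Prop :=
  (S.map fun X => X.leaves.val).sum = U.val

theorem isLeafPartition_cons_iff {X : ClusterTree V} {S : Multiset (ClusterTree V)}
    {U : Finset V} :
    IsLeafPartition (X ::ₘ S) U ↔ X.leaves ⊆ U ∧ IsLeafPartition S (U \ X.leaves) := by
  simp only [IsLeafPartition, Multiset.map_cons, Multiset.sum_cons, sdiff_val]
  constructor
  · intro h
    have hle : X.leaves.val ≤ U.val := h ▸ Multiset.le_add_right _ _
    exact ⟨val_le_iff.1 hle, by rw [← h, add_tsub_cancel_left]⟩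
  · rintro ⟨hsub, h⟩
    rw [h, add_tsub_cancel_of_le (val_le_iff.2 hsub)]

theorem IsLeafPartition.sum_map_sum_leaves {S : Multiset (ClusterTree V)} {U : Finset V}
    (h : IsLeafPartition S U) (f : V → ℝ) :
    (S.map fun X => ∑ v ∈ X.leaves, f v).sum = ∑ v ∈ U, f v := by
  induction S using Multiset.induction generalizing U with
  | empty =>
    rw [IsLeafPartition, Multiset.map_zero, Multiset.sum_zero, eq_comm, val_eq_zero] at h
    simp [h]
  | cons X S ih =>
    obtain ⟨hsub, hS⟩ := isLeafPartition_cons_iff.1 h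
    rw [Multiset.map_cons, Multiset.sum_cons, ih hS, add_comm, sum_sdiff hsub]

theorem IsLeafPartition.sum_map_card {S : Multiset (ClusterTree V)} {U : Finset V}
    (h : IsLeafPartition S U) : (S.map fun X => (X.leaves.card : ℝ)).sum = U.card := by
  simpa using h.sum_map_sum_leaves fun _ => 1

theorem IsLeafPartition.sum_map_cutWeight {S : Multiset (ClusterTree V)} {U : Finset V}
    (h : IsLeafPartition S U) (w : V → V → ℝ) (A : Finset V) :
    (S.map fun X => cutWeight w A X.leaves).sum = cutWeight w A U := by
  simp only [cutWeight, sum_comm (s := A)]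
  exact h.sum_map_sum_leaves _

theorem isLeafPartition_initState [Fintype V] : IsLeafPartition (initState V) univ := by
  simp [IsLeafPartition, initState, leaves_leaf]

theorem IsLeafPartition.leaves_eq_of_singleton {T : ClusterTree V} {U : Finset V}
    (h : IsLeafPartition {T} U) : T.leaves = U := by
  simpa [IsLeafPartition] using h

end LeafPartition

section AverageLinkage

variable {V : Type} [Fintype V] [DecidableEq V] (w : V → V → ℝ)

noncomputable def linkagePotential (X : ClusterTree V) : ℝ :=
  dasguptaCost w X + (2 * X.leaves.card + Fintype.card V) / 4 * cutWeight w X.leaves X.leavesᶜ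

theorem linkagePotential_add_le_node (hsym : ∀ u v, w u v = w v u) (hw : ∀ u v, 0 ≤ w u v)
    {A B : ClusterTree V} (hAB : Disjoint A.leaves B.leaves)
    (hmin : ((A.leaves ∪ B.leaves)ᶜ.card : ℝ) * cutWeight w A.leaves B.leaves ≤
      B.leaves.card * cutWeight w A.leaves (A.leaves ∪ B.leaves)ᶜ) :
    linkagePotential w A + linkagePotential w B ≤ linkagePotential w (node A B) := by
  have hcard : (Fintype.card V : ℝ) =
      A.leaves.card + B.leaves.card + (A.leaves ∪ B.leaves)ᶜ.card := by
    have h := card_add_card_compl (A.leaves ∪ B.leaves)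
    rw [card_union_of_disjoint hAB] at h
    exact_mod_cast h.symm
  have hcompl_A := compl_eq_union_compl_union hAB
  have hcompl_B := compl_eq_union_compl_union hAB.symm
  rw [union_comm B.leaves] at hcompl_B
  have hdisj_A : Disjoint A.leaves (A.leaves ∪ B.leaves)ᶜ :=
    disjoint_compl_right.mono_left subset_union_left
  have hdisj_B : Disjoint B.leaves (A.leaves ∪ B.leaves)ᶜ :=
    disjoint_compl_right.mono_left subset_union_right
  have hBR := cutWeight_nonneg w hw B.leaves (A.leaves ∪ B.leaves)ᶜ
  simp only [linkagePotential, dasguptaCost, leaves_node]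
  rw [hcompl_A, hcompl_B, cutWeight_union_right w _ hdisj_B, cutWeight_union_right w _ hdisj_A,
    cutWeight_union_left w hAB, cutWeight_comm w hsym B.leaves A.leaves,
    card_union_of_disjoint hAB, hcard]
  push_cast
  nlinarith [mul_nonneg (Nat.cast_nonneg (α := ℝ) A.leaves.card) hBR]

theorem MergeStep.isLeafPartition_and_potential_le (hsym : ∀ u v, w u v = w v u)
    (hw : ∀ u v, 0 ≤ w u v) {S S' : Multiset (ClusterTree V)}
    (hstep : MergeStep (avgDist w) (fun a b => a ≤ b) S S') (hS : IsLeafPartition S univ) :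
    IsLeafPartition S' univ ∧
      (S.map (linkagePotential w)).sum ≤ (S'.map (linkagePotential w)).sum := by
  obtain ⟨rest, A, B, hmin⟩ := hstep
  obtain ⟨-, hBrest⟩ := isLeafPartition_cons_iff.1 hS
  obtain ⟨hB, hrest⟩ := isLeafPartition_cons_iff.1 hBrest
  have hAB : Disjoint A.leaves B.leaves := (subset_sdiff.1 hB).2.symm
  have hR : (univ \ A.leaves) \ B.leaves = (A.leaves ∪ B.leaves)ᶜ := by
    rw [sdiff_sdiff_left, compl_eq_univ_sdiff]; rfl
  rw [hR] at hrest
  refine ⟨isLeafPartition_cons_iff.2 ⟨subset_univ _, by rwa [leaves_node, ← compl_eq_univ_sdiff]⟩,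
    ?_⟩
  have hmin_rest : ∀ D ∈ rest, (D.leaves.card : ℝ) * cutWeight w A.leaves B.leaves ≤
      B.leaves.card * cutWeight w A.leaves D.leaves := by
    intro D hD
    obtain ⟨rest', rfl⟩ := Multiset.exists_cons_of_mem hD
    refine card_mul_cutWeight_le_of_avgDist_le w (leaves_nonempty A) (leaves_nonempty B)
      (leaves_nonempty D) (hmin A D (B ::ₘ rest') ?_)
    rw [Multiset.cons_swap B D]
  have hsum := Multiset.sum_map_le_sum_map _ _ hmin_rest
  rw [Multiset.sum_map_mul_right, Multiset.sum_map_mul_left, hrest.sum_map_card,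
    hrest.sum_map_cutWeight] at hsum
  have hnode := linkagePotential_add_le_node w hsym hw hAB hsum
  simp only [Multiset.map_cons, Multiset.sum_cons]
  linarith

theorem isLeafPartition_and_potential_le_of_reachable (hsym : ∀ u v, w u v = w v u)
    (hw : ∀ u v, 0 ≤ w u v) {S : Multiset (ClusterTree V)}
    (h : Relation.ReflTransGen (MergeStep (avgDist w) (fun a b => a ≤ b)) (initState V) S) :
    IsLeafPartition S univ ∧
      ((initState V).map (linkagePotential w)).sum ≤ (S.map (linkagePotential w)).sum := by
  induction h with
  | refl => exact ⟨isLeafPartition_initState, le_rfl⟩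
  | tail _ hstep ih =>
    obtain ⟨hS, hle⟩ := ih
    obtain ⟨hS', hle'⟩ := MergeStep.isLeafPartition_and_potential_le w hsym hw hstep hS
    exact ⟨hS', hle.trans hle'⟩

theorem linkagePotential_sum_initState (hdiag : ∀ v, w v v = 0) :
    ((initState V).map (linkagePotential w)).sum = (Fintype.card V + 2) / 2 * totalWeight w := by
  have hleaf : ∀ v, linkagePotential w (leaf v) = (Fintype.card V + 2) / 4 * ∑ u, w v u := by
    intro v
    rw [linkagePotential, dasguptaCost, leaves_leaf, cutWeight, sum_singleton,
      ← sum_compl_add_sum {v}, sum_singleton, hdiag, card_singleton]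
    push_cast
    ring
  rw [initState, Multiset.map_map, Function.comp_def]
  simp only [hleaf]
  rw [← sum_eq_multiset_sum, ← mul_sum, totalWeight]
  ring

theorem le_dasguptaCost_of_isLinkageOutput (hsym : ∀ u v, w u v = w v u)
    (hw : ∀ u v, 0 ≤ w u v) (hdiag : ∀ v, w v v = 0) {T : ClusterTree V}
    (hT : IsLinkageOutput (avgDist w) (fun a b => a ≤ b) T) :
    (Fintype.card V + 2) / 2 * totalWeight w ≤ dasguptaCost w T := by
  obtain ⟨hpart, hle⟩ := isLeafPartition_and_potential_le_of_reachable w hsym hw hT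
  rw [linkagePotential_sum_initState w hdiag] at hle
  simpa [linkagePotential, hpart.leaves_eq_of_singleton, cutWeight_empty_right] using hle

end AverageLinkage

/-- Theorem 4, CKMM: average-linkage is a `2`-approximation for the
dissimilarity objective: any output `T` has `val(T) ≥ n · Σ_e w(e) / 2 ≥ OPT/2`. -/
theorem statement5 {V : Type} [Fintype V] [DecidableEq V] (w : V → V → ℝ)
    (hsym : ∀ u v, w u v = w v u) (hnonneg : ∀ u v, 0 ≤ w u v) (hdiag : ∀ v, w v v = 0)
    (T : ClusterTree V) (hout : IsLinkageOutput (avgDist w) (fun a b => a ≤ b) T) :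
    (Fintype.card V : ℝ) * totalWeight w / 2 ≤ dasguptaCost w T ∧
    ∀ T' : ClusterTree V, IsClusterTree T' →
      dasguptaCost w T' / 2 ≤ dasguptaCost w T := by
  have hW : 0 ≤ totalWeight w :=
    div_nonneg (cutWeight_nonneg w hnonneg univ univ) zero_le_two
  have hlower := le_dasguptaCost_of_isLinkageOutput w hsym hnonneg hdiag hout
  refine ⟨by linarith, fun T' hT' => ?_⟩
  have hupper := dasguptaCost_le_card_mul_totalWeight w hsym hnonneg hT'
  linarith
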